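/- Fix an integer N ≥ 1, a row-stochastic N×N matrix Π = (π_{nn'}) (all entries nonnegative, each row summing to one), positive parameters β ∈ (0,1), τ_C ≥ 0, γ > 0, υ ∈ (0,1), R > 0 and r_1,…,r_N > −1. For a ∈ (0,∞)^N and n ∈ {1,…,N} define κ_n(a) = ν_γ^{-1}( max_{θ∈[0,1]} Σ_{n'} π_{nn'} ν_γ(a_{n'} R_{n'}(θ)) ). Then there exists a unique vector a* ∈ (0,∞)^N satisfying a*_n = ((1−β)/(1+τ_C))^{1−β} (β·κ_n(a*))^β for every n ∈ {1,…,N}. -/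

import Mathlib

/-- The Box–Cox transformation `ν_γ` on `(0,∞)`. -/
noncomputable def boxCox (γ c : ℝ) : ℝ :=
  if γ = 1 then Real.log c else (c ^ (1 - γ) - 1) / (1 - γ)

/-- The inverse of the Box–Cox transformation `ν_γ` (on its range). -/
noncomputable def boxCoxInv (γ y : ℝ) : ℝ :=
  if γ = 1 then Real.exp y else (1 + (1 - γ) * y) ^ (1 / (1 - γ))

/-!
Write `T a = c (β κ(a))^β`. The certainty equivalent `κ` is positive, monotone and positively
homogeneous of degree one on the positive orthant: Box–Cox utility satisfies
`ν(l c) = l^{1-γ} ν(c) + ν(l)`, and the affine map `y ↦ l^{1-γ} y + ν(l)` commutes with the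
supremum and is undone by `ν⁻¹` as multiplication by `l`. In log coordinates `x = log a` the map
`log ∘ κ ∘ exp` is therefore nonexpansive for the sup norm, so `log ∘ T ∘ exp` is a
`β`-contraction of `ℝ^N`, and Banach's fixed point theorem gives exactly one positive fixed point.
-/

open Real Finset

section MonoHomogeneous

variable {ι : Type*}

structure IsMonoHomogeneous (K : (ι → ℝ) → ℝ) : Prop where
  pos : ∀ a, (∀ i, 0 < a i) → 0 < K a
  mono : ∀ a b, (∀ i, 0 < a i) → a ≤ b → K a ≤ K b
  smul : ∀ a, (∀ i, 0 < a i) → ∀ l, 0 < l → K (l • a) = l * K a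

namespace IsMonoHomogeneous

variable {K : (ι → ℝ) → ℝ}

theorem const_mul (hK : IsMonoHomogeneous K) {b : ℝ} (hb : 0 < b) :
    IsMonoHomogeneous fun a => b * K a where
  pos a ha := mul_pos hb (hK.pos a ha)
  mono a a' ha haa' := mul_le_mul_of_nonneg_left (hK.mono a a' ha haa') hb.le
  smul a ha l hl := by rw [hK.smul a ha l hl]; ring

variable [Fintype ι]

theorem log_le_log_add_dist (hK : IsMonoHomogeneous K) (x y : ι → ℝ) :
    log (K (exp ∘ x)) ≤ log (K (exp ∘ y)) + dist x y := by
  have hexp_le : exp ∘ x ≤ exp (dist x y) • (exp ∘ y) := fun i => by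
    rw [Pi.smul_apply, smul_eq_mul, Function.comp_apply, Function.comp_apply, ← exp_add]
    have hxy : dist (x i) (y i) ≤ dist x y := dist_le_pi_dist x y i
    rw [Real.dist_eq] at hxy
    exact exp_le_exp.2 (by linarith [le_abs_self (x i - y i)])
  have hy : ∀ i, 0 < (exp ∘ y) i := fun i => exp_pos _
  calc log (K (exp ∘ x)) ≤ log (K (exp (dist x y) • (exp ∘ y))) :=
        log_le_log (hK.pos _ fun i => exp_pos _) (hK.mono _ _ (fun i => exp_pos _) hexp_le)
    _ = log (K (exp ∘ y)) + dist x y := by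
        rw [hK.smul _ hy _ (exp_pos _), log_mul (exp_pos _).ne' (hK.pos _ hy).ne', log_exp,
          add_comm]

theorem dist_log_le (hK : IsMonoHomogeneous K) (x y : ι → ℝ) :
    dist (log (K (exp ∘ x))) (log (K (exp ∘ y))) ≤ dist x y := by
  rw [Real.dist_eq, abs_sub_le_iff]
  constructor
  · linarith [hK.log_le_log_add_dist x y]
  · linarith [hK.log_le_log_add_dist y x, dist_comm x y]

end IsMonoHomogeneous

variable [Fintype ι]

theorem contractingWith_log_mul_rpow {K : ι → (ι → ℝ) → ℝ} (hK : ∀ n, IsMonoHomogeneous (K n))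
    {β : ℝ} (hβ0 : 0 ≤ β) (hβ1 : β < 1) (c : ℝ) :
    ContractingWith ⟨β, hβ0⟩ fun x n => log c + β * log (K n (exp ∘ x)) := by
  refine ⟨hβ1, LipschitzWith.of_dist_le_mul fun x y => ?_⟩
  refine (dist_pi_le_iff (mul_nonneg hβ0 dist_nonneg)).2 fun n => ?_
  rw [Real.dist_eq, add_sub_add_left_eq_sub, ← mul_sub, abs_mul, abs_of_nonneg hβ0,
    ← Real.dist_eq]
  exact mul_le_mul_of_nonneg_left ((hK n).dist_log_le x y) hβ0

/-- In log coordinates this is the fixed-point equation of `contractingWith_log_mul_rpow`. -/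
theorem existsUnique_pos_eq_mul_rpow {K : ι → (ι → ℝ) → ℝ} (hK : ∀ n, IsMonoHomogeneous (K n))
    {β c : ℝ} (hβ0 : 0 ≤ β) (hβ1 : β < 1) (hc : 0 < c) :
    ∃! a : ι → ℝ, (∀ n, 0 < a n) ∧ ∀ n, a n = c * K n a ^ β := by
  have hF := contractingWith_log_mul_rpow hK hβ0 hβ1 c
  have hlog_eq : ∀ a : ι → ℝ, (∀ n, 0 < a n) → ∀ n,
      log c + β * log (K n a) = log (c * K n a ^ β) := fun a ha n => by
    rw [log_mul hc.ne' (rpow_pos_of_pos ((hK n).pos a ha) β).ne',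
      log_rpow ((hK n).pos a ha)]
  set x₀ := ContractingWith.fixedPoint _ hF
  have hfix : ∀ n, log c + β * log (K n (exp ∘ x₀)) = x₀ n :=
    congrFun (ContractingWith.fixedPoint_isFixedPt hF)
  refine ⟨exp ∘ x₀, ⟨fun n => exp_pos _, fun n => ?_⟩, ?_⟩
  · have hpos : ∀ i, 0 < (exp ∘ x₀) i := fun i => exp_pos _
    rw [Function.comp_apply, ← hfix n, hlog_eq _ hpos n,
      exp_log (mul_pos hc (rpow_pos_of_pos ((hK n).pos _ hpos) β))]
  · rintro a ⟨ha, ha_eq⟩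
    have hexp_log : exp ∘ (log ∘ a) = a := funext fun i => exp_log (ha i)
    have hlog_a : log ∘ a = x₀ := ContractingWith.fixedPoint_unique hF <| funext fun n => by
      simp only [Function.comp_apply]
      rw [hexp_log, hlog_eq a ha n, ← ha_eq n]
    rw [← hlog_a, hexp_log]

end MonoHomogeneous

section BoxCox

variable {γ : ℝ}

theorem boxCox_le_boxCox {c d : ℝ} (hc : 0 < c) (hcd : c ≤ d) : boxCox γ c ≤ boxCox γ d := by
  unfold boxCox
  split_ifs with h
  · exact log_le_log hc hcd
  · rcases (sub_ne_zero.2 (Ne.symm h)).lt_or_gt with hγ | hγ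
    · exact div_le_div_of_nonpos_of_le hγ.le (by linarith [rpow_le_rpow_of_nonpos hc hcd hγ.le])
    · exact div_le_div_of_nonneg_right (by linarith [rpow_le_rpow hc.le hcd hγ.le]) hγ.le

theorem one_add_mul_boxCox (c : ℝ) : 1 + (1 - γ) * boxCox γ c = c ^ (1 - γ) := by
  unfold boxCox
  split_ifs with h
  · simp [h]
  · have hγ : (1 : ℝ) - γ ≠ 0 := sub_ne_zero.2 (Ne.symm h)
    field_simp
    ring

theorem boxCox_mul {l c : ℝ} (hl : 0 < l) (hc : 0 < c) :
    boxCox γ (l * c) = l ^ (1 - γ) * boxCox γ c + boxCox γ l := by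
  unfold boxCox
  split_ifs with h
  · rw [log_mul hl.ne' hc.ne', h, sub_self, rpow_zero]
    ring
  · have hγ : (1 : ℝ) - γ ≠ 0 := sub_ne_zero.2 (Ne.symm h)
    rw [mul_rpow hl.le hc.le]
    field_simp
    ring

theorem boxCoxInv_pos {y : ℝ} (hy : 0 < 1 + (1 - γ) * y) : 0 < boxCoxInv γ y := by
  unfold boxCoxInv
  split_ifs
  exacts [exp_pos y, rpow_pos_of_pos hy _]

theorem boxCoxInv_le_boxCoxInv {y z : ℝ} (hy : 0 < 1 + (1 - γ) * y)
    (hz : 0 < 1 + (1 - γ) * z) (hyz : y ≤ z) : boxCoxInv γ y ≤ boxCoxInv γ z := by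
  unfold boxCoxInv
  split_ifs with h
  · exact exp_le_exp.2 hyz
  · rcases (sub_ne_zero.2 (Ne.symm h)).lt_or_gt with hγ | hγ
    · exact rpow_le_rpow_of_nonpos hz (by nlinarith) (one_div_nonpos.2 hγ.le)
    · exact rpow_le_rpow hy.le (by nlinarith) (by positivity)

theorem boxCoxInv_mul_rpow_add_boxCox {l y : ℝ} (hl : 0 < l) (hy : 0 < 1 + (1 - γ) * y) :
    boxCoxInv γ (l ^ (1 - γ) * y + boxCox γ l) = l * boxCoxInv γ y := by
  by_cases h : γ = 1
  · subst h
    simp only [boxCoxInv, boxCox, if_true, sub_self, rpow_zero, mul_one, exp_add, exp_log hl,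
      mul_comm]
  · have hγ : (1 : ℝ) - γ ≠ 0 := sub_ne_zero.2 (Ne.symm h)
    have hbase : 1 + (1 - γ) * (l ^ (1 - γ) * y + boxCox γ l)
        = l ^ (1 - γ) * (1 + (1 - γ) * y) := by
      linear_combination one_add_mul_boxCox (γ := γ) l
    rw [boxCoxInv, boxCoxInv, if_neg h, if_neg h, hbase, mul_rpow (rpow_pos_of_pos hl _).le hy.le,
      ← rpow_mul hl.le, mul_one_div_cancel hγ, rpow_one]

variable {ι : Type*} [Fintype ι] {p : ι → ℝ}

theorem sum_mul_boxCox_le_sum_mul_boxCox (hp : ∀ i, 0 ≤ p i) {c d : ι → ℝ}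
    (hc : ∀ i, 0 < c i) (hcd : c ≤ d) :
    ∑ i, p i * boxCox γ (c i) ≤ ∑ i, p i * boxCox γ (d i) :=
  sum_le_sum fun i _ => mul_le_mul_of_nonneg_left (boxCox_le_boxCox (hc i) (hcd i)) (hp i)

theorem sum_mul_boxCox_mul (hp1 : ∑ i, p i = 1) {l : ℝ} (hl : 0 < l) {c : ι → ℝ}
    (hc : ∀ i, 0 < c i) :
    ∑ i, p i * boxCox γ (l * c i) = l ^ (1 - γ) * ∑ i, p i * boxCox γ (c i) + boxCox γ l :=
  calc ∑ i, p i * boxCox γ (l * c i)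
      = ∑ i, (l ^ (1 - γ) * (p i * boxCox γ (c i)) + p i * boxCox γ l) :=
        sum_congr rfl fun i _ => by rw [boxCox_mul hl (hc i)]; ring
    _ = l ^ (1 - γ) * ∑ i, p i * boxCox γ (c i) + boxCox γ l := by
        rw [sum_add_distrib, ← mul_sum, ← sum_mul, hp1, one_mul]

theorem one_add_mul_sum_mul_boxCox_pos (hp : ∀ i, 0 ≤ p i) (hp1 : ∑ i, p i = 1) {c : ι → ℝ}
    (hc : ∀ i, 0 < c i) : 0 < 1 + (1 - γ) * ∑ i, p i * boxCox γ (c i) := by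
  obtain ⟨j, -, hj⟩ := exists_ne_zero_of_sum_ne_zero (hp1 ▸ one_ne_zero : ∑ i, p i ≠ 0)
  calc 0 < ∑ i, p i * c i ^ (1 - γ) :=
        sum_pos' (fun i _ => mul_nonneg (hp i) (rpow_pos_of_pos (hc i) _).le)
          ⟨j, mem_univ j, mul_pos ((hp j).lt_of_ne' hj) (rpow_pos_of_pos (hc j) _)⟩
    _ = ∑ i, p i + ∑ i, (1 - γ) * (p i * boxCox γ (c i)) := by
        rw [← sum_add_distrib]
        exact sum_congr rfl fun i _ => by rw [← one_add_mul_boxCox (c i)]; ring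
    _ = 1 + (1 - γ) * ∑ i, p i * boxCox γ (c i) := by rw [hp1, mul_sum]

end BoxCox

section CertaintyEquivalent

variable {ι Θ : Type*} [Fintype ι]

noncomputable def expectedBoxCox (γ : ℝ) (p : ι → ℝ) (ρ : ι → Θ → ℝ) (a : ι → ℝ) (θ : Θ) : ℝ :=
  ∑ i, p i * boxCox γ (a i * ρ i θ)

/-- The certainty equivalent `κ` of the paper, for an arbitrary set `s` of portfolio choices. -/
noncomputable def maxCertaintyEquiv (γ : ℝ) (p : ι → ℝ) (ρ : ι → Θ → ℝ) (s : Set Θ)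
    (a : ι → ℝ) : ℝ :=
  boxCoxInv γ (sSup (expectedBoxCox γ p ρ a '' s))

variable {γ : ℝ} {p : ι → ℝ} {ρ : ι → Θ → ℝ} {s : Set Θ} {a : ι → ℝ}

theorem expectedBoxCox_le (hp : ∀ i, 0 ≤ p i) (hρ : ∀ i, ∀ θ ∈ s, 0 < ρ i θ) {M : ι → ℝ}
    (hM : ∀ i, M i ∈ upperBounds (ρ i '' s)) (ha : ∀ i, 0 < a i) {θ : Θ} (hθ : θ ∈ s) :
    expectedBoxCox γ p ρ a θ ≤ ∑ i, p i * boxCox γ (a i * M i) :=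
  sum_mul_boxCox_le_sum_mul_boxCox hp (fun i => mul_pos (ha i) (hρ i θ hθ))
    fun i => mul_le_mul_of_nonneg_left (hM i ⟨θ, hθ, rfl⟩) (ha i).le

theorem expectedBoxCox_smul (hp1 : ∑ i, p i = 1) (hρ : ∀ i, ∀ θ ∈ s, 0 < ρ i θ)
    (ha : ∀ i, 0 < a i) {l : ℝ} (hl : 0 < l) {θ : Θ} (hθ : θ ∈ s) :
    expectedBoxCox γ p ρ (l • a) θ = l ^ (1 - γ) * expectedBoxCox γ p ρ a θ + boxCox γ l := by
  simp only [expectedBoxCox, Pi.smul_apply, smul_eq_mul, mul_assoc]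
  exact sum_mul_boxCox_mul hp1 hl fun i => mul_pos (ha i) (hρ i θ hθ)

theorem bddAbove_expectedBoxCox_image (hp : ∀ i, 0 ≤ p i) (hρ : ∀ i, ∀ θ ∈ s, 0 < ρ i θ)
    (hρs : ∀ i, BddAbove (ρ i '' s)) (ha : ∀ i, 0 < a i) :
    BddAbove (expectedBoxCox γ p ρ a '' s) := by
  choose M hM using hρs
  exact ⟨_, Set.forall_mem_image.2 fun θ hθ => expectedBoxCox_le hp hρ hM ha hθ⟩

/-- `sSup` lies in the domain where `boxCoxInv` inverts `boxCox`: for `γ ≤ 1` because it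
dominates one value of the objective, for `γ > 1` because the returns are bounded above. -/
theorem one_add_mul_sSup_expectedBoxCox_pos (hp : ∀ i, 0 ≤ p i) (hp1 : ∑ i, p i = 1)
    (hs : s.Nonempty) (hρ : ∀ i, ∀ θ ∈ s, 0 < ρ i θ) (hρs : ∀ i, BddAbove (ρ i '' s))
    (ha : ∀ i, 0 < a i) : 0 < 1 + (1 - γ) * sSup (expectedBoxCox γ p ρ a '' s) := by
  obtain ⟨θ₀, hθ₀⟩ := hs
  rcases le_or_gt γ 1 with hγ | hγ
  · have hle : expectedBoxCox γ p ρ a θ₀ ≤ sSup (expectedBoxCox γ p ρ a '' s) :=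
      le_csSup (bddAbove_expectedBoxCox_image hp hρ hρs ha) ⟨θ₀, hθ₀, rfl⟩
    have hpos : 0 < 1 + (1 - γ) * expectedBoxCox γ p ρ a θ₀ :=
      one_add_mul_sum_mul_boxCox_pos hp hp1 fun i => mul_pos (ha i) (hρ i θ₀ hθ₀)
    nlinarith
  · choose M hM using hρs
    have hle : sSup (expectedBoxCox γ p ρ a '' s) ≤ ∑ i, p i * boxCox γ (a i * M i) :=
      csSup_le ⟨_, θ₀, hθ₀, rfl⟩
        (Set.forall_mem_image.2 fun θ hθ => expectedBoxCox_le hp hρ hM ha hθ)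
    have hpos := one_add_mul_sum_mul_boxCox_pos (γ := γ) hp hp1
      fun i => mul_pos (ha i) ((hρ i θ₀ hθ₀).trans_le (hM i ⟨θ₀, hθ₀, rfl⟩))
    nlinarith

theorem sSup_expectedBoxCox_smul (hp : ∀ i, 0 ≤ p i) (hp1 : ∑ i, p i = 1) (hs : s.Nonempty)
    (hρ : ∀ i, ∀ θ ∈ s, 0 < ρ i θ) (hρs : ∀ i, BddAbove (ρ i '' s)) (ha : ∀ i, 0 < a i)
    {l : ℝ} (hl : 0 < l) :
    sSup (expectedBoxCox γ p ρ (l • a) '' s)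
      = l ^ (1 - γ) * sSup (expectedBoxCox γ p ρ a '' s) + boxCox γ l := by
  have himage : expectedBoxCox γ p ρ (l • a) '' s
      = (fun y => l ^ (1 - γ) * y + boxCox γ l) '' (expectedBoxCox γ p ρ a '' s) := by
    rw [← Set.image_comp]
    exact Set.image_congr fun θ hθ => expectedBoxCox_smul hp1 hρ ha hl hθ
  have hmono : Monotone fun y => l ^ (1 - γ) * y + boxCox γ l := fun y z hyz => by
    dsimp only
    nlinarith [rpow_nonneg hl.le (1 - γ)]
  rw [himage, ← hmono.map_csSup_of_continuousAt (by fun_prop) (hs.image _)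
    (bddAbove_expectedBoxCox_image hp hρ hρs ha)]

theorem isMonoHomogeneous_maxCertaintyEquiv (hp : ∀ i, 0 ≤ p i) (hp1 : ∑ i, p i = 1)
    (hs : s.Nonempty) (hρ : ∀ i, ∀ θ ∈ s, 0 < ρ i θ) (hρs : ∀ i, BddAbove (ρ i '' s)) :
    IsMonoHomogeneous (maxCertaintyEquiv γ p ρ s) where
  pos a ha := boxCoxInv_pos (one_add_mul_sSup_expectedBoxCox_pos hp hp1 hs hρ hρs ha)
  mono a b ha hab := by
    have hb : ∀ i, 0 < b i := fun i => (ha i).trans_le (hab i)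
    refine boxCoxInv_le_boxCoxInv (one_add_mul_sSup_expectedBoxCox_pos hp hp1 hs hρ hρs ha)
      (one_add_mul_sSup_expectedBoxCox_pos hp hp1 hs hρ hρs hb)
      (csSup_le (hs.image _) (Set.forall_mem_image.2 fun θ hθ => ?_))
    exact (sum_mul_boxCox_le_sum_mul_boxCox hp (fun i => mul_pos (ha i) (hρ i θ hθ))
      fun i => mul_le_mul_of_nonneg_right (hab i) (hρ i θ hθ).le).trans
        (le_csSup (bddAbove_expectedBoxCox_image hp hρ hρs hb) ⟨θ, hθ, rfl⟩)
  smul a ha l hl := by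
    rw [maxCertaintyEquiv, maxCertaintyEquiv, sSup_expectedBoxCox_smul hp hp1 hs hρ hρs ha hl,
      boxCoxInv_mul_rpow_add_boxCox hl (one_add_mul_sSup_expectedBoxCox_pos hp hp1 hs hρ hρs ha)]

end CertaintyEquivalent

theorem stmt6_general (N : ℕ)
    (P : Fin N → Fin N → ℝ) (hP : ∀ n n', 0 ≤ P n n') (hP1 : ∀ n, ∑ n', P n n' = 1)
    (β : ℝ) (hβ : β ∈ Set.Ioo (0:ℝ) 1)
    (τC : ℝ) (hτC : 0 ≤ τC)
    (γ : ℝ)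
    (υ : ℝ) (hυ : υ ∈ Set.Ioo (0:ℝ) 1)
    (R : ℝ) (hR : 0 < R)
    (r : Fin N → ℝ) (hr : ∀ n, -1 < r n)
    (Rn : Fin N → ℝ → ℝ)
    (hRn : ∀ n θ, Rn n θ = (1 / υ) * ((1 + r n) * θ + R * (1 - θ)))
    (κ : Fin N → (Fin N → ℝ) → ℝ)
    (hκ : ∀ n a, κ n a = boxCoxInv γ
      (sSup ((fun θ => ∑ n', P n n' * boxCox γ (a n' * Rn n' θ)) '' Set.Icc (0:ℝ) 1))) :
    ∃! a : Fin N → ℝ, (∀ n, 0 < a n) ∧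
      ∀ n, a n = ((1 - β) / (1 + τC)) ^ (1 - β) * (β * κ n a) ^ β := by
  obtain ⟨hβ0, hβ1⟩ := hβ
  have hRn_pos : ∀ n, ∀ θ ∈ Set.Icc (0:ℝ) 1, 0 < Rn n θ := by
    rintro n θ ⟨hθ0, hθ1⟩
    have hr' : 0 < 1 + r n := by linarith [hr n]
    rw [hRn]
    refine mul_pos (one_div_pos.2 hυ.1) ?_
    rcases hθ0.eq_or_lt with rfl | hθ0
    · linarith
    · exact add_pos_of_pos_of_nonneg (mul_pos hr' hθ0) (mul_nonneg hR.le (by linarith))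
  have hRn_bdd : ∀ n, BddAbove (Rn n '' Set.Icc 0 1) := fun n =>
    isCompact_Icc.bddAbove_image (by rw [funext (hRn n)]; fun_prop)
  obtain rfl : κ = fun n => maxCertaintyEquiv γ (P n) Rn (Set.Icc 0 1) :=
    funext fun n => funext (hκ n)
  exact existsUnique_pos_eq_mul_rpow (fun n =>
      (isMonoHomogeneous_maxCertaintyEquiv (hP n) (hP1 n) (Set.nonempty_Icc.2 zero_le_one)
        hRn_pos hRn_bdd).const_mul hβ0) hβ0.le hβ1
    (rpow_pos_of_pos (div_pos (sub_pos.2 hβ1) (by linarith)) _)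

/-- core of Proposition 1: there is a unique positive vector `a*` solving
the nonlinear system `a*_n = ((1−β)/(1+τ_C))^{1−β}(β κ_n(a*))^β`, where
`κ_n(a) = ν_γ⁻¹(max_{θ∈[0,1]} Σ_{n'} π_{nn'} ν_γ(a_{n'} R_{n'}(θ)))`. -/
theorem stmt6 (N : ℕ) (hN : 1 ≤ N)
    (P : Fin N → Fin N → ℝ) (hP : ∀ n n', 0 ≤ P n n') (hP1 : ∀ n, ∑ n', P n n' = 1)
    (β : ℝ) (hβ : β ∈ Set.Ioo (0:ℝ) 1)
    (τC : ℝ) (hτC : 0 ≤ τC)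
    (γ : ℝ) (hγ : 0 < γ)
    (υ : ℝ) (hυ : υ ∈ Set.Ioo (0:ℝ) 1)
    (R : ℝ) (hR : 0 < R)
    (r : Fin N → ℝ) (hr : ∀ n, -1 < r n)
    (Rn : Fin N → ℝ → ℝ)
    (hRn : ∀ n θ, Rn n θ = (1 / υ) * ((1 + r n) * θ + R * (1 - θ)))
    (κ : Fin N → (Fin N → ℝ) → ℝ)
    (hκ : ∀ n a, κ n a = boxCoxInv γ
      (sSup ((fun θ => ∑ n', P n n' * boxCox γ (a n' * Rn n' θ)) '' Set.Icc (0:ℝ) 1))) :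
    ∃! a : Fin N → ℝ, (∀ n, 0 < a n) ∧
      ∀ n, a n = ((1 - β) / (1 + τC)) ^ (1 - β) * (β * κ n a) ^ β :=
  stmt6_general N P hP hP1 β hβ τC hτC γ υ hυ R hR r hr Rn hRn κ hκ
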